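/- Jacobi–Maupertuis principle (converse direction, Euclidean coordinates): let V : ℝⁿ → ℝ be twice continuously differentiable, fix E ∈ ℝ, set f(p) = 2(E − V(p)), and let σ : ℝ → ℝⁿ be a twice differentiable curve contained in the region {V < E} satisfying the geodesic equation of the conformal metric G = f·⟨·,·⟩, namely σ''(s) + (1/f(σ))⟨∇f(σ), σ'(s)⟩·σ'(s) − (1/(2 f(σ)))·‖σ'(s)‖²·∇f(σ) = 0, with G-unit speed normalization f(σ(s))·‖σ'(s)‖² = 1 for all s (which is preserved along geodesics once it holds at s = 0). Reparametrize σ by the time parameter t with dt/ds = 1/f(σ(s)); i.e., let γ(t) = σ(s(t)) where s(t) is the inverse of t(s) = ∫₀ˢ (1/f(σ(u))) du. Then γ satisfies Newton's equation γ''(t) = −∇V(γ(t)) for all t, and its energy (1/2)‖γ'(t)‖² + V(γ(t)) equals E identically. -/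

import Mathlib

/-!
Since `ds/dt = f(σ(s))`, the chain rule gives `γ' = f σ'` and `γ'' = f (f σ'' + ⟨∇f, σ'⟩ σ')`
(evaluated at `s(t)`). Substituting `σ''` from the geodesic equation cancels the `σ'` terms and
leaves `(f ‖σ'‖² / 2) ∇f = ∇f / 2 = -∇V` by unit speed. Unit speed also gives the energy:
`‖γ'‖² / 2 = f² ‖σ'‖² / 2 = f / 2 = E - V`.
-/

open InnerProductSpace

theorem hasDerivAt_rightInverse_of_deriv_pos {φ ψ φ' : ℝ → ℝ}
    (hφ : ∀ s, HasDerivAt φ (φ' s) s) (hpos : ∀ s, 0 < φ' s) (hinv : ∀ t, φ (ψ t) = t)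
    (t : ℝ) : HasDerivAt ψ (φ' (ψ t))⁻¹ t := by
  have hmono : StrictMono φ := strictMono_of_hasDerivAt_pos hφ hpos
  let e := StrictMono.orderIsoOfSurjective φ hmono fun t => ⟨ψ t, hinv t⟩
  have hψ : ψ = e.symm := funext fun t => hmono.injective <| by
    rw [hinv]; exact (e.apply_symm_apply t).symm
  exact (hφ (ψ t)).of_local_left_inverse (hψ ▸ e.symm.continuous.continuousAt)
    (hpos _).ne' (.of_forall hinv)

section

variable {F : Type*} [NormedAddCommGroup F] [InnerProductSpace ℝ F]

theorem HasGradientAt.comp_hasDerivAt [CompleteSpace F] {f : F → ℝ} {g v : F} {σ : ℝ → F}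
    {s : ℝ} (hf : HasGradientAt f g (σ s)) (hσ : HasDerivAt σ v s) :
    HasDerivAt (fun u => f (σ u)) ⟪g, v⟫_ℝ s := by
  simpa [Function.comp_def, toDual_apply_apply] using hf.hasFDerivAt.comp_hasDerivAt s hσ

theorem gradient_const_mul_const_sub [CompleteSpace F] {V : F → ℝ} {p : F}
    (hV : DifferentiableAt ℝ V p) (c E : ℝ) :
    gradient (fun q => c * (E - V q)) p = (-c) • gradient V p := by
  have hD : HasFDerivAt (fun q => c * (E - V q)) (c • (0 - fderiv ℝ V p)) p :=
    ((hasFDerivAt_const E p).sub hV.hasFDerivAt).const_mul c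
  rw [gradient, hD.fderiv, gradient]
  simp

theorem smul_smul_add_inner_smul_of_geodesic {c : ℝ} (hc : c ≠ 0) {g v a : F}
    (hgeo : a + (⟪g, v⟫_ℝ / c) • v - (‖v‖ ^ 2 / (2 * c)) • g = 0)
    (hunit : c * ‖v‖ ^ 2 = 1) :
    c • (c • a + ⟪g, v⟫_ℝ • v) = (1 / 2 : ℝ) • g := by
  rw [eq_sub_of_add_eq (sub_eq_zero.mp hgeo)]
  match_scalars
  all_goals field_simp
  · linear_combination hunit
  · ring

theorem half_norm_smul_sq_add_eq_of_unit_speed {c E U : ℝ} {v : F} (hc : c = 2 * (E - U))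
    (hunit : c * ‖v‖ ^ 2 = 1) : 1 / 2 * ‖c • v‖ ^ 2 + U = E := by
  rw [norm_smul, mul_pow, Real.norm_eq_abs, sq_abs]
  linear_combination (c / 2) * hunit + (1 / 2) * hc

end

theorem jacobi_maupertuis_converse_general
    (n : ℕ) (V : EuclideanSpace ℝ (Fin n) → ℝ)
    (hV : ContDiff ℝ 2 V) (E : ℝ)
    (f : EuclideanSpace ℝ (Fin n) → ℝ) (hf : f = fun p => 2 * (E - V p))
    (σ σ' σ'' : ℝ → EuclideanSpace ℝ (Fin n))
    (hσ : ∀ s, HasDerivAt σ (σ' s) s)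
    (hσ' : ∀ s, HasDerivAt σ' (σ'' s) s)
    (hregion : ∀ s, V (σ s) < E)
    (hgeo : ∀ s, σ'' s
      + ((inner ℝ (gradient f (σ s)) (σ' s) : ℝ) / f (σ s)) • σ' s
      - (‖σ' s‖ ^ 2 / (2 * f (σ s))) • gradient f (σ s) = 0)
    (hunit : ∀ s, f (σ s) * ‖σ' s‖ ^ 2 = 1)
    (tOf : ℝ → ℝ) (htOf : tOf = fun s => ∫ u in (0:ℝ)..s, 1 / f (σ u))
    (sFun : ℝ → ℝ)
    (hinv₂ : ∀ t, tOf (sFun t) = t)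
    (γ : ℝ → EuclideanSpace ℝ (Fin n)) (hγdef : γ = fun t => σ (sFun t)) :
    ∃ γ' γ'' : ℝ → EuclideanSpace ℝ (Fin n),
      (∀ t, HasDerivAt γ (γ' t) t) ∧
      (∀ t, HasDerivAt γ' (γ'' t) t) ∧
      (∀ t, γ'' t = - gradient V (γ t)) ∧
      (∀ t, (1 / 2) * ‖γ' t‖ ^ 2 + V (γ t) = E) := by
  have hVd : Differentiable ℝ V := hV.differentiable (by norm_num)
  have hfd : Differentiable ℝ f := hf ▸ by fun_prop
  have hfσ_pos : ∀ s, 0 < f (σ s) := fun s => by simpa [hf] using hregion s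
  have hfσ : ∀ s, HasDerivAt (fun u => f (σ u)) ⟪gradient f (σ s), σ' s⟫_ℝ s :=
    fun s => (hfd _).hasGradientAt.comp_hasDerivAt (hσ s)
  have hσc : Continuous σ := continuous_iff_continuousAt.2 fun s => (hσ s).continuousAt
  have hspeed : Continuous fun u => 1 / f (σ u) :=
    continuous_const.div (hfd.continuous.comp hσc) fun u => (hfσ_pos u).ne'
  have htOf_deriv : ∀ s, HasDerivAt tOf (1 / f (σ s)) s :=
    fun s => htOf ▸ (hspeed.integral_hasStrictDerivAt 0 s).hasDerivAt
  have hsFun_deriv : ∀ t, HasDerivAt sFun (f (σ (sFun t))) t := fun t => by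
    simpa using hasDerivAt_rightInverse_of_deriv_pos htOf_deriv
      (fun s => one_div_pos.2 (hfσ_pos s)) hinv₂ t
  subst hγdef
  refine ⟨fun t => f (σ (sFun t)) • σ' (sFun t),
    fun t => f (σ (sFun t)) • (f (σ (sFun t)) • σ'' (sFun t)
      + ⟪gradient f (σ (sFun t)), σ' (sFun t)⟫_ℝ • σ' (sFun t)),
    fun t => (hσ _).scomp t (hsFun_deriv t),
    fun t => ((hfσ _).smul (hσ' _)).scomp t (hsFun_deriv t),
    fun t => ?_, fun t => ?_⟩
  · dsimp only
    rw [smul_smul_add_inner_smul_of_geodesic (hfσ_pos _).ne' (hgeo _) (hunit _),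
      hf, gradient_const_mul_const_sub (hVd _)]
    module
  · exact half_norm_smul_sq_add_eq_of_unit_speed (by rw [hf]) (hunit _)

/-- Jacobi–Maupertuis principle (converse direction, Euclidean coordinates):
let `V` be C², fix `E`, set `f(p) = 2(E − V(p))`, and let `σ` be a twice
differentiable curve contained in `{V < E}` satisfying the geodesic equation
of the conformal metric `G = f⟨·,·⟩`,
`σ'' + (1/f)⟨∇f, σ'⟩σ' − (1/(2f))‖σ'‖²∇f = 0`, with G-unit speed
`f(σ(s))‖σ'(s)‖² = 1`.  Reparametrize by `t(s) = ∫₀ˢ (1/f(σ(u))) du` with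
inverse `s(t)` (`sFun`), and set `γ(t) = σ(s(t))`.  Then `γ` is twice
differentiable, satisfies Newton's equation `γ'' = −∇V(γ)`, and has energy
`(1/2)‖γ'‖² + V(γ) = E` identically. -/
theorem jacobi_maupertuis_converse
    (n : ℕ) (V : EuclideanSpace ℝ (Fin n) → ℝ)
    (hV : ContDiff ℝ 2 V) (E : ℝ)
    (f : EuclideanSpace ℝ (Fin n) → ℝ) (hf : f = fun p => 2 * (E - V p))
    (σ σ' σ'' : ℝ → EuclideanSpace ℝ (Fin n))
    (hσ : ∀ s, HasDerivAt σ (σ' s) s)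
    (hσ' : ∀ s, HasDerivAt σ' (σ'' s) s)
    (hregion : ∀ s, V (σ s) < E)
    (hgeo : ∀ s, σ'' s
      + ((inner ℝ (gradient f (σ s)) (σ' s) : ℝ) / f (σ s)) • σ' s
      - (‖σ' s‖ ^ 2 / (2 * f (σ s))) • gradient f (σ s) = 0)
    (hunit : ∀ s, f (σ s) * ‖σ' s‖ ^ 2 = 1)
    (tOf : ℝ → ℝ) (htOf : tOf = fun s => ∫ u in (0:ℝ)..s, 1 / f (σ u))
    (sFun : ℝ → ℝ)
    (hinv₁ : ∀ s, sFun (tOf s) = s)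
    (hinv₂ : ∀ t, tOf (sFun t) = t)
    (γ : ℝ → EuclideanSpace ℝ (Fin n)) (hγdef : γ = fun t => σ (sFun t)) :
    ∃ γ' γ'' : ℝ → EuclideanSpace ℝ (Fin n),
      (∀ t, HasDerivAt γ (γ' t) t) ∧
      (∀ t, HasDerivAt γ' (γ'' t) t) ∧
      (∀ t, γ'' t = - gradient V (γ t)) ∧
      (∀ t, (1 / 2) * ‖γ' t‖ ^ 2 + V (γ t) = E) :=
  jacobi_maupertuis_converse_general n V hV E f hf σ σ' σ'' hσ hσ' hregion hgeo hunit tOf htOf sFun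
    hinv₂ γ hγdef
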